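/- arXiv:2206.07995 — 2 statements merged into one kernel-verified Lean document; each statement's English description precedes it below -/
import Mathlib

section
/- Let q ≥ 2 and n ≥ 2 be integers. For x drawn uniformly at random from Z_q^n, the expected number of maximal alternating segments satisfies E_x[ A(x) ] = 1 + (n−2)(q−1)(q−2)/q² + (n−1)/q; in particular, for q = 2, E_x[ A(x) ] = (n+1)/2. -/
open scoped Classical

/-- Length of a longest common subsequence of two lists. -/
noncomputable def lcsLen {α : Type*} (x y : List α) : ℕ :=
  sSup {k | ∃ z : List α, z.Sublist x ∧ z.Sublist y ∧ z.length = k}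

/-- The fixed-length Levenshtein (FLL) distance on `Fin n → Fin q`:
`d_ℓ(x,y) = n - LCS(x,y)`. -/
noncomputable def fllDist {q n : ℕ} (x y : Fin n → Fin q) : ℕ :=
  n - lcsLen (List.ofFn x) (List.ofFn y)

/-- The FLL `t`-ball centered at `x`. -/
noncomputable def fllBall (q n t : ℕ) (x : Fin n → Fin q) : Finset (Fin n → Fin q) :=
  Finset.univ.filter fun y => fllDist x y ≤ t

/-- The Hamming `t`-ball centered at `x`. -/
noncomputable def hammingBall (q n t : ℕ) (x : Fin n → Fin q) : Finset (Fin n → Fin q) :=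
  Finset.univ.filter fun y => hammingDist x y ≤ t

/-- The number of runs (maximal blocks of consecutive equal symbols) of a list. -/
def numRuns {α : Type*} [DecidableEq α] : List α → ℕ
  | [] => 0
  | [_] => 1
  | a :: b :: l => (if a = b then 0 else 1) + numRuns (b :: l)

/-- A list is alternating (of shape `σ σ' σ σ' ⋯` with `σ ≠ σ'`): adjacent entries
differ and entries two apart agree. -/
def IsAltList {α : Type*} (l : List α) : Prop :=
  (∀ i, ∀ h : i + 1 < l.length, l.get ⟨i, by omega⟩ ≠ l.get ⟨i + 1, h⟩) ∧
  (∀ i, ∀ h : i + 2 < l.length, l.get ⟨i, by omega⟩ = l.get ⟨i + 2, h⟩)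

/-- The contiguous block `l_i ⋯ l_j` of a list (0-indexed, inclusive). -/
def blockSeg {α : Type*} (l : List α) (i j : ℕ) : List α := (l.drop i).take (j + 1 - i)

/-- `(i, j)` indexes a maximal alternating segment of `l`. -/
def IsMaxAltSeg {α : Type*} (l : List α) (i j : ℕ) : Prop :=
  i ≤ j ∧ j < l.length ∧ IsAltList (blockSeg l i j) ∧
    (i = 0 ∨ ¬ IsAltList (blockSeg l (i - 1) j)) ∧
    (j = l.length - 1 ∨ ¬ IsAltList (blockSeg l i (j + 1)))

/-- The index pairs of the maximal alternating segments of `l`. -/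
noncomputable def maxAltSegs {α : Type*} (l : List α) : Finset (ℕ × ℕ) :=
  (Finset.range l.length ×ˢ Finset.range l.length).filter fun p => IsMaxAltSeg l p.1 p.2

/-- `A(x)`: the number of maximal alternating segments. -/
noncomputable def numAltSegs {α : Type*} (l : List α) : ℕ := (maxAltSegs l).card

/-- The sum `Σ s_i` of the lengths of the maximal alternating segments. -/
noncomputable def segLenSum {α : Type*} (l : List α) : ℕ :=
  ∑ p ∈ maxAltSegs l, (p.2 + 1 - p.1)

/-- The sum `Σ s_i²` of the squared lengths of the maximal alternating segments. -/
noncomputable def segLenSqSum {α : Type*} (l : List α) : ℕ :=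
  ∑ p ∈ maxAltSegs l, (p.2 + 1 - p.1) ^ 2

/-- `x ∈ Z_2^n` is `a`-balanced: it has `a` maximal alternating segments, each of
length `⌈n/a⌉` or `⌈n/a⌉ - 1`. -/
def IsBalanced (n a : ℕ) (x : Fin n → Fin 2) : Prop :=
  numAltSegs (List.ofFn x) = a ∧
    ∀ p ∈ maxAltSegs (List.ofFn x),
      p.2 + 1 - p.1 = (n + a - 1) / a ∨ p.2 + 1 - p.1 = (n + a - 1) / a - 1

/-- The number of zero entries of the difference vector
`x' = (x₂ - x₁, …, x_n - x_{n-1})` (differences mod `q`). -/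
def zerosDiff {q n : ℕ} (x : Fin n → Fin q) : ℕ :=
  (List.zipWith (fun a b => a - b) (List.ofFn x).tail (List.ofFn x)).countP fun v => v.val == 0

/-- Hamming weight of a binary word. -/
def wt {n : ℕ} (a : Fin n → Fin 2) : ℕ := (Finset.univ.filter fun i => a i ≠ 0).card

/-- An anticode of diameter one in `Z_2^n` under the FLL metric. -/
def IsAnticode1 (n : ℕ) (A : Finset (Fin n → Fin 2)) : Prop :=
  ∀ a ∈ A, ∀ b ∈ A, fllDist a b ≤ 1

/-- A maximal anticode of diameter one. -/
def IsMaximalAnticode1 (n : ℕ) (A : Finset (Fin n → Fin 2)) : Prop :=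
  IsAnticode1 n A ∧ ∀ B : Finset (Fin n → Fin 2), IsAnticode1 n B → A ⊆ B → A = B

/-- `χ(s)`: the total number, over all `x ∈ Z_q^n`, of maximal alternating
segments of `x` of length `s`. -/
noncomputable def chi (q n s : ℕ) : ℕ :=
  ∑ x : Fin n → Fin q, ((maxAltSegs (List.ofFn x)).filter fun p => p.2 + 1 - p.1 = s).card

/-
Every maximal alternating segment is determined by its first position, and a position
`i ≥ 1` starts one exactly when `x_{i-1} = x_i`, or `i` is not the last position and
`x_{i-1}, x_i, x_{i+1}` are pairwise distinct. Hence `A(x)` is a sum of `n` indicators, each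
depending on a window of at most three coordinates, and linearity of expectation gives
`E[A] = 1 + (n - 2) (1/q + q(q-1)(q-2)/q³) + 1/q`.
-/

open Finset Function Fintype

section AltOn

variable {α : Type*} (f : ℕ → α) (n : ℕ)

def IsAltOn (i j : ℕ) : Prop :=
  (∀ k, i ≤ k → k + 1 ≤ j → f k ≠ f (k + 1)) ∧ (∀ k, i ≤ k → k + 2 ≤ j → f k = f (k + 2))

def IsMaxAltOn (i j : ℕ) : Prop :=
  i ≤ j ∧ j < n ∧ IsAltOn f i j ∧ (i = 0 ∨ ¬ IsAltOn f (i - 1) j) ∧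
    (j + 1 = n ∨ ¬ IsAltOn f i (j + 1))

def IsAltSegStart (i : ℕ) : Prop :=
  i = 0 ∨ f (i - 1) = f i ∨
    (i + 1 < n ∧ f (i - 1) ≠ f i ∧ f (i - 1) ≠ f (i + 1) ∧ f i ≠ f (i + 1))

variable {f n}

theorem isAltSegStart_zero : IsAltSegStart f n 0 :=
  Or.inl rfl

theorem IsAltOn.mono {i j j' : ℕ} (h : IsAltOn f i j) (hj : j' ≤ j) : IsAltOn f i j' :=
  ⟨fun k hk h1 => h.1 k hk (by omega), fun k hk h2 => h.2 k hk (by omega)⟩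

theorem isAltOn_self (i : ℕ) : IsAltOn f i i :=
  ⟨fun _ _ _ => by omega, fun _ _ _ => by omega⟩

theorem isAltOn_pred_iff {i j : ℕ} (hi : 1 ≤ i) (hij : i ≤ j) (h : IsAltOn f i j) :
    IsAltOn f (i - 1) j ↔ f (i - 1) ≠ f i ∧ (i + 1 ≤ j → f (i - 1) = f (i + 1)) := by
  constructor
  · intro h'
    refine ⟨by simpa [Nat.sub_add_cancel hi] using h'.1 (i - 1) le_rfl (by omega), fun hj => ?_⟩
    simpa [show i - 1 + 2 = i + 1 by omega] using h'.2 (i - 1) le_rfl (by omega)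
  · rintro ⟨hne, heq⟩
    refine ⟨fun k hk h1 => ?_, fun k hk h2 => ?_⟩
    · rcases Nat.lt_or_ge k i with hk' | hk'
      · obtain rfl : k = i - 1 := by omega
        simpa [Nat.sub_add_cancel hi] using hne
      · exact h.1 k hk' h1
    · rcases Nat.lt_or_ge k i with hk' | hk'
      · obtain rfl : k = i - 1 := by omega
        simpa [show i - 1 + 2 = i + 1 by omega] using heq (by omega)
      · exact h.2 k hk' h2

theorem isAltOn_succ_iff {i : ℕ} : IsAltOn f i (i + 1) ↔ f i ≠ f (i + 1) := by
  refine ⟨fun h => h.1 i le_rfl le_rfl, fun h => ⟨fun k hk hk1 => ?_, fun _ _ _ => by omega⟩⟩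
  obtain rfl : k = i := by omega
  exact h

theorem IsMaxAltOn.isAltSegStart {i j : ℕ} (h : IsMaxAltOn f n i j) : IsAltSegStart f n i := by
  obtain ⟨hij, hjn, halt, hleft | hleft, -⟩ := h
  · exact Or.inl hleft
  rcases Nat.eq_zero_or_pos i with hi | hi
  · exact Or.inl hi
  rw [isAltOn_pred_iff hi hij halt] at hleft
  by_cases heq : f (i - 1) = f i
  · exact Or.inr (Or.inl heq)
  obtain ⟨hj, hne⟩ : i + 1 ≤ j ∧ f (i - 1) ≠ f (i + 1) := by tauto
  exact Or.inr (Or.inr ⟨by omega, heq, hne, halt.1 i le_rfl hj⟩)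

theorem IsMaxAltOn.right_unique {i j j' : ℕ} (h : IsMaxAltOn f n i j) (h' : IsMaxAltOn f n i j') :
    j = j' := by
  by_contra hne
  wlog hlt : j < j' generalizing j j'
  · exact this h' h (Ne.symm hne) (by omega)
  rcases h.2.2.2.2 with hn | hna
  · exact absurd h'.2.1 (by omega)
  · exact hna (h'.2.2.1.mono hlt)

theorem exists_isMaxAltOn_of_isAltSegStart {i : ℕ} (hi : i < n) (hs : IsAltSegStart f n i) :
    ∃ j, IsMaxAltOn f n i j := by
  let P j := i ≤ j ∧ IsAltOn f i j
  have hPi : P i := ⟨le_rfl, isAltOn_self i⟩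
  set j := Nat.findGreatest P (n - 1)
  have hij : i ≤ j := Nat.le_findGreatest (by omega) hPi
  have hjn : j < n := by have := Nat.findGreatest_le (P := P) (n - 1); omega
  have halt : IsAltOn f i j := (Nat.findGreatest_spec (P := P) (by omega) hPi).2
  have hright : j + 1 = n ∨ ¬ IsAltOn f i (j + 1) := by
    refine or_iff_not_imp_left.2 fun hj hc => ?_
    exact Nat.findGreatest_is_greatest (Nat.lt_succ_self j) (by omega) ⟨by omega, hc⟩
  refine ⟨j, hij, hjn, halt, ?_, hright⟩
  rcases Nat.eq_zero_or_pos i with h0 | hi0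
  · exact Or.inl h0
  refine Or.inr ?_
  rw [isAltOn_pred_iff hi0 hij halt]
  rcases hs with h0 | heq | ⟨hi1, -, hne', hne⟩
  · omega
  · exact fun h => h.1 heq
  · have hj : i + 1 ≤ j := by
      by_contra hlt
      have hji : j = i := by omega
      rw [hji] at hright
      exact hright.elim (by omega) fun h => h (isAltOn_succ_iff.2 hne)
    exact fun h => hne' (h.2 hj)

end AltOn

section Lists

variable {α : Type*}

-- Reading `l` through `l[·]?` lets the index conditions of `IsAltOn` go without bounds proofs.

theorem isAltList_blockSeg_iff {l : List α} {i j : ℕ} (hj : j < l.length) :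
    IsAltList (blockSeg l i j) ↔ IsAltOn (l[·]?) i j := by
  have hlen : (blockSeg l i j).length = j + 1 - i := by
    simp only [blockSeg, List.length_take, List.length_drop]; omega
  have hget : ∀ t (h : t < (blockSeg l i j).length),
      some ((blockSeg l i j).get ⟨t, h⟩) = l[i + t]? := by
    intro t h
    simp [blockSeg]
  unfold IsAltList IsAltOn
  beta_reduce
  constructor
  · rintro ⟨h1, h2⟩
    refine ⟨fun k hk hk1 => ?_, fun k hk hk2 => ?_⟩
    · obtain ⟨t, rfl⟩ := Nat.exists_eq_add_of_le hk
      rw [add_assoc, ← hget t (by omega), ← hget (t + 1) (by omega), ne_eq, Option.some_inj]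
      exact h1 t (by omega)
    · obtain ⟨t, rfl⟩ := Nat.exists_eq_add_of_le hk
      rw [add_assoc, ← hget t (by omega), ← hget (t + 2) (by omega), Option.some_inj]
      exact h2 t (by omega)
  · rintro ⟨h1, h2⟩
    refine ⟨fun t ht => ?_, fun t ht => ?_⟩
    · rw [ne_eq, ← Option.some_inj, hget, hget, ← add_assoc]
      exact h1 (i + t) (by omega) (by omega)
    · rw [← Option.some_inj, hget, hget, ← add_assoc]
      exact h2 (i + t) (by omega) (by omega)

theorem isMaxAltSeg_iff {l : List α} {i j : ℕ} :
    IsMaxAltSeg l i j ↔ IsMaxAltOn (l[·]?) l.length i j := by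
  unfold IsMaxAltSeg IsMaxAltOn
  refine ⟨fun ⟨hij, hj, halt, hleft, hright⟩ => ⟨hij, hj, ?_, ?_, ?_⟩,
    fun ⟨hij, hj, halt, hleft, hright⟩ => ⟨hij, hj, ?_, ?_, ?_⟩⟩
  · exact (isAltList_blockSeg_iff hj).1 halt
  · exact hleft.imp_right fun h h' => h ((isAltList_blockSeg_iff hj).2 h')
  · by_cases hj1 : j + 1 < l.length
    · exact hright.imp (by omega) fun h h' => h ((isAltList_blockSeg_iff hj1).2 h')
    · exact Or.inl (by omega)
  · exact (isAltList_blockSeg_iff hj).2 halt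
  · exact hleft.imp_right fun h h' => h ((isAltList_blockSeg_iff hj).1 h')
  · by_cases hj1 : j + 1 < l.length
    · exact hright.imp (by omega) fun h h' => h ((isAltList_blockSeg_iff hj1).1 h')
    · exact Or.inl (by omega)

theorem numAltSegs_eq_card_isAltSegStart (l : List α) :
    numAltSegs l = #{i ∈ range l.length | IsAltSegStart (l[·]?) l.length i} := by
  refine card_bij (fun p _ => p.1) ?_ ?_ ?_
  · rintro ⟨i, j⟩ hp
    simp only [maxAltSegs, mem_filter, mem_product, mem_range, isMaxAltSeg_iff] at hp ⊢
    exact ⟨hp.1.1, hp.2.isAltSegStart⟩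
  · rintro ⟨i, j⟩ hp ⟨i', j'⟩ hp' (rfl : i = i')
    simp only [maxAltSegs, mem_filter, isMaxAltSeg_iff] at hp hp'
    rw [hp.2.right_unique hp'.2]
  · intro i hi
    simp only [mem_filter, mem_range] at hi
    obtain ⟨j, hj⟩ := exists_isMaxAltOn_of_isAltSegStart hi.1 hi.2
    refine ⟨(i, j), ?_, rfl⟩
    simp only [maxAltSegs, mem_filter, mem_product, mem_range, isMaxAltSeg_iff]
    exact ⟨⟨hi.1, hj.2.1⟩, hj⟩

end Lists

def windowEmb (s : ℕ) {m n : ℕ} (h : s + m ≤ n) : Fin m ↪ Fin n :=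
  ⟨fun k => ⟨s + k, by omega⟩, fun a b hab => by simpa [Fin.ext_iff] using hab⟩

@[simp]
theorem windowEmb_apply (s : ℕ) {m n : ℕ} (h : s + m ≤ n) (k : Fin m) :
    windowEmb s h k = ⟨s + k, by omega⟩ :=
  rfl

section Words

variable {β : Type*}

theorem injective_fin_three_iff (y : Fin 3 → β) :
    Injective y ↔ y 0 ≠ y 1 ∧ y 0 ≠ y 2 ∧ y 1 ≠ y 2 := by
  rw [← List.nodup_ofFn]
  simp [List.ofFn_succ, and_assoc]

theorem isAltSegStart_ofFn_iff_of_lt {n i : ℕ} (x : Fin n → β) (h1 : 1 ≤ i) (h2 : i + 1 < n) :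
    IsAltSegStart ((List.ofFn x)[·]?) n i ↔
      (x ∘ windowEmb (i - 1) (by omega : i - 1 + 3 ≤ n)) 0 =
          (x ∘ windowEmb (i - 1) (by omega : i - 1 + 3 ≤ n)) 1 ∨
        Injective (x ∘ windowEmb (i - 1) (by omega : i - 1 + 3 ≤ n)) := by
  have e1 : i - 1 + 1 = i := by omega
  have e2 : i - 1 + 2 = i + 1 := by omega
  rw [injective_fin_three_iff]
  simp [IsAltSegStart, show i - 1 < n by omega, show i < n by omega, h2, e1, e2,
    show i ≠ 0 by omega]

theorem isAltSegStart_ofFn_iff_of_eq {n i : ℕ} (x : Fin n → β) (h1 : 1 ≤ i) (h2 : i + 1 = n) :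
    IsAltSegStart ((List.ofFn x)[·]?) n i ↔ x ⟨i - 1, by omega⟩ = x ⟨i - 1 + 1, by omega⟩ := by
  simp [IsAltSegStart, show i - 1 < n by omega, show i < n by omega, h2,
    show i - 1 + 1 = i by omega, show i ≠ 0 by omega]

variable [Fintype β]

theorem sum_numAltSegs_ofFn_div_eq_sum_dens (n : ℕ) :
    (∑ x : Fin n → β, (numAltSegs (List.ofFn x) : ℚ)) / card β ^ n =
      ∑ i ∈ range n, (dens {x : Fin n → β | IsAltSegStart ((List.ofFn x)[·]?) n i} : ℚ) := by
  simp_rw [numAltSegs_eq_card_isAltSegStart, List.length_ofFn, card_filter, dens_eq_card_div_card,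
    card_fun, Fintype.card_fin]
  push_cast
  rw [sum_comm, sum_div]
  simp_rw [card_filter]
  push_cast
  rfl

end Words

section Counting

variable {ι κ β : Type*} [Fintype ι] [Fintype κ] [Fintype β] [DecidableEq ι] [DecidableEq κ]

theorem card_filter_comp_embedding (e : ι ↪ κ) (P : (ι → β) → Prop) [DecidablePred P] :
    #{x : κ → β | P (x ∘ e)} = #{y : ι → β | P y} * card β ^ (card κ - card ι) := by
  let E : (κ → β) ≃ (ι → β) × ({k // k ∉ Set.range e} → β) :=
    (Equiv.piEquivPiSubtypeProd (· ∈ Set.range e) fun _ => β).trans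
      (((Equiv.ofInjective e e.injective).arrowCongr (Equiv.refl β)).symm.prodCongr (Equiv.refl _))
  rw [Finset.card_equiv E (t := ({y : ι → β | P y} : Finset _) ×ˢ (univ : Finset _))
      fun x => by simp [E]; rfl, card_product,
    card_univ, card_fun, card_subtype_compl, Set.card_range_of_injective e.injective]

theorem dens_filter_comp_embedding [Nonempty β] (e : ι ↪ κ) (P : (ι → β) → Prop) [DecidablePred P] :
    dens {x : κ → β | P (x ∘ e)} = dens {y : ι → β | P y} := by
  have hβ : (card β : ℚ≥0) ≠ 0 := by simp
  rw [dens_eq_card_div_card, dens_eq_card_div_card, card_filter_comp_embedding, card_fun, card_fun]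
  push_cast
  rw [pow_sub₀ _ hβ (card_le_of_embedding e)]
  field_simp

theorem dens_injective : dens {y : ι → β | Injective y} =
    (card β).descFactorial (card ι) / card β ^ card ι := by
  rw [dens_eq_card_div_card, ← Fintype.card_subtype,
    card_congr (Equiv.subtypeInjectiveEquivEmbedding ι β), card_embedding_eq, card_fun]
  push_cast; rfl

end Counting

section Density

variable {β : Type*} [Fintype β] [Nonempty β]

theorem dens_apply_zero_eq_apply_one : dens {y : Fin 2 → β | y 0 = y 1} = (card β : ℚ≥0)⁻¹ := by
  have : #{y : Fin 2 → β | y 0 = y 1} = card β :=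
    (Fintype.card_subtype _).symm.trans (card_congr
      { toFun := fun y => y.1 0
        invFun := fun b => ⟨fun _ => b, rfl⟩
        left_inv := fun y => Subtype.ext (funext fun i => by fin_cases i; rfl; exact y.2)
        right_inv := fun b => rfl })
  have hβ : (card β : ℚ≥0) ≠ 0 := by simp
  rw [dens_eq_card_div_card, this, card_fun, Fintype.card_fin]
  push_cast
  field_simp

theorem dens_apply_eq_apply_succ {n a : ℕ} (h : a + 2 ≤ n) :
    dens {x : Fin n → β | x ⟨a, by omega⟩ = x ⟨a + 1, h⟩} = (card β : ℚ≥0)⁻¹ :=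
  (dens_filter_comp_embedding (windowEmb a h) fun y => y 0 = y 1).trans dens_apply_zero_eq_apply_one

theorem dens_apply_zero_eq_apply_one_or_injective :
    dens {y : Fin 3 → β | y 0 = y 1 ∨ Injective y} =
      (card β : ℚ≥0)⁻¹ + (card β).descFactorial 3 / card β ^ 3 := by
  have h01 : dens {y : Fin 3 → β | y 0 = y 1} = (card β : ℚ≥0)⁻¹ := by
    simpa using dens_apply_eq_apply_succ (β := β) (n := 3) (a := 0) (by norm_num)
  rw [filter_or, dens_union_of_disjoint, h01]
  · rw [dens_injective, Fintype.card_fin]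
  · exact disjoint_filter.2 fun y _ h hy => by simpa using hy.ne (show (0 : Fin 3) ≠ 1 by decide) h

theorem dens_isAltSegStart_of_lt {n i : ℕ} (h1 : 1 ≤ i) (h2 : i + 1 < n) :
    dens {x : Fin n → β | IsAltSegStart ((List.ofFn x)[·]?) n i} =
      (card β : ℚ≥0)⁻¹ + (card β).descFactorial 3 / card β ^ 3 := by
  have hwindow := dens_filter_comp_embedding (β := β) (windowEmb (i - 1) (by omega : i - 1 + 3 ≤ n))
    fun y => y 0 = y 1 ∨ Injective y
  rw [filter_congr fun x _ => isAltSegStart_ofFn_iff_of_lt x h1 h2, hwindow,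
    dens_apply_zero_eq_apply_one_or_injective]

theorem dens_isAltSegStart_of_eq {n i : ℕ} (h1 : 1 ≤ i) (h2 : i + 1 = n) :
    dens {x : Fin n → β | IsAltSegStart ((List.ofFn x)[·]?) n i} = (card β : ℚ≥0)⁻¹ := by
  rw [filter_congr fun x _ => isAltSegStart_ofFn_iff_of_eq x h1 h2]
  exact dens_apply_eq_apply_succ (by omega)

theorem sum_numAltSegs_ofFn_div_card_pow {n : ℕ} (hn : 2 ≤ n) :
    (∑ x : Fin n → β, (numAltSegs (List.ofFn x) : ℚ)) / card β ^ n =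
      1 + (n - 2) * ((card β : ℚ)⁻¹ + (card β).descFactorial 3 / card β ^ 3) + (card β : ℚ)⁻¹ := by
  obtain ⟨m, rfl⟩ : ∃ m, n = m + 2 := ⟨n - 2, by omega⟩
  rw [sum_numAltSegs_ofFn_div_eq_sum_dens, sum_range_succ, sum_range_succ',
    Finset.sum_congr rfl fun i hi => by
      rw [dens_isAltSegStart_of_lt (by omega) (by linarith [mem_range.1 hi])],
    dens_isAltSegStart_of_eq (by omega) rfl, filter_true_of_mem fun x _ => isAltSegStart_zero,
    dens_univ]
  push_cast
  simp only [sum_const, card_range, nsmul_eq_mul]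
  ring

end Density

/-- The expected number of maximal alternating segments of a uniform
`x ∈ Z_q^n` is `1 + (n-2)(q-1)(q-2)/q² + (n-1)/q`; in particular for `q = 2` it is
`(n+1)/2`. -/
theorem expected_numAltSegs (q n : ℕ) (hq : 2 ≤ q) (hn : 2 ≤ n) :
    (∑ x : Fin n → Fin q, (numAltSegs (List.ofFn x) : ℚ)) / (q : ℚ) ^ n =
        1 + ((n : ℚ) - 2) * ((q : ℚ) - 1) * ((q : ℚ) - 2) / (q : ℚ) ^ 2
          + ((n : ℚ) - 1) / q ∧
      (q = 2 →
        (∑ x : Fin n → Fin q, (numAltSegs (List.ofFn x) : ℚ)) / (q : ℚ) ^ n =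
          ((n : ℚ) + 1) / 2) := by
  have : Nonempty (Fin q) := ⟨⟨0, by omega⟩⟩
  have hmean := sum_numAltSegs_ofFn_div_card_pow (β := Fin q) hn
  have hdesc : (q.descFactorial 3 : ℚ) = q * (q - 1) * (q - 2) := by
    push_cast [Nat.descFactorial, Nat.sub_zero, Nat.cast_sub hq, Nat.cast_sub (by omega : 1 ≤ q)]
    ring
  rw [Fintype.card_fin, hdesc] at hmean
  have hgen : (∑ x : Fin n → Fin q, (numAltSegs (List.ofFn x) : ℚ)) / (q : ℚ) ^ n =
      1 + ((n : ℚ) - 2) * ((q : ℚ) - 1) * ((q : ℚ) - 2) / (q : ℚ) ^ 2 + ((n : ℚ) - 1) / q := by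
    rw [hmean]
    field_simp
    ring
  refine ⟨hgen, fun hq2 => ?_⟩
  subst hq2
  rw [hgen]
  ring
end

section
/- Let n > 1 be an integer. Every anticode of diameter one in Z_2^n has size at most n + 1, and the set { a ∈ Z_2^n : wt(a) ≤ 1 } of words of Hamming weight at most one is an anticode of diameter one of size exactly n + 1; hence the maximum size of a maximal anticode of diameter one in Z_2^n is n + 1. -/
open scoped Classical

/-! Weigh each `1` of a binary word by its (1-based) position. Inserting a
symbol into a word `z` of length `n - 1` raises this moment by the number of `1`s to the right
of the new symbol, plus its position if the symbol is a `1`; the increment lies in `[0, n]` and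
determines the resulting word, since two insertions with equal increments move the new symbol
only across a run of copies of itself. Two words at FLL distance at most one are insertions
into a common word, so on an anticode of diameter one the moment is injective with values in
an interval of length `n`. -/

section Lcs

variable {α : Type*}

theorem bddAbove_commonSublistLengths (x y : List α) :
    BddAbove {k | ∃ z : List α, z.Sublist x ∧ z.Sublist y ∧ z.length = k} := by
  refine ⟨x.length, fun k hk => ?_⟩
  obtain ⟨z, hzx, -, rfl⟩ := hk
  exact hzx.length_le

theorem exists_sublist_length_eq_lcsLen (x y : List α) :
    ∃ z : List α, z.Sublist x ∧ z.Sublist y ∧ z.length = lcsLen x y := by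
  refine Nat.sSup_mem ?_ (bddAbove_commonSublistLengths x y)
  exact ⟨0, [], List.nil_sublist x, List.nil_sublist y, rfl⟩

theorem length_le_lcsLen {x y z : List α} (hx : z.Sublist x) (hy : z.Sublist y) :
    z.length ≤ lcsLen x y :=
  le_csSup (bddAbove_commonSublistLengths x y) ⟨z, hx, hy, rfl⟩

end Lcs

namespace List

variable {α : Type*}

theorem Sublist.exists_eq_append_cons_of_length_eq_succ {z l : List α} (h : z.Sublist l)
    (hl : l.length = z.length + 1) : ∃ p a r, z = p ++ r ∧ l = p ++ a :: r := by
  induction h with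
  | slnil => simp at hl
  | @cons z l a h _ =>
      obtain rfl : z = l := h.eq_of_length (by simp at hl; omega)
      exact ⟨[], a, z, rfl, rfl⟩
  | @cons_cons z l b _ ih =>
      obtain ⟨p, a, r, rfl, rfl⟩ := ih (by simpa using hl)
      exact ⟨b :: p, a, r, rfl, rfl⟩

theorem append_cons_append_eq_of_forall_eq {p s r : List α} {a : α} (hs : ∀ b ∈ s, b = a) :
    p ++ a :: (s ++ r) = p ++ s ++ a :: r := by
  rw [eq_replicate_iff.mpr ⟨rfl, hs⟩, append_assoc, ← cons_append, ← replicate_succ,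
    replicate_succ', append_assoc, singleton_append]

end List

/-- `∑ i, (i + 1) * lᵢ`, as each `1` is counted once in every suffix containing it. -/
def onesMoment : List (Fin 2) → ℕ
  | [] => 0
  | a :: l => (a :: l).count 1 + onesMoment l

theorem onesMoment_append (l₁ l₂ : List (Fin 2)) :
    onesMoment (l₁ ++ l₂) = onesMoment l₁ + l₁.length * l₂.count 1 + onesMoment l₂ := by
  induction l₁ with
  | nil => simp [onesMoment]
  | cons a l ih =>
      rw [List.cons_append, onesMoment, ← List.cons_append, List.count_append, ih, onesMoment,
        List.length_cons]
      ring

theorem onesMoment_insert (p r : List (Fin 2)) (a : Fin 2) :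
    onesMoment (p ++ a :: r) =
      onesMoment (p ++ r) + r.count 1 + if a = 1 then p.length + 1 else 0 := by
  rw [onesMoment_append, onesMoment_append, onesMoment, List.count_cons]
  obtain rfl | rfl := Fin.exists_fin_two.mp ⟨a, rfl⟩ <;> simp only [Fin.isValue, BEq.rfl,
    zero_ne_one, beq_iff_eq, ↓reduceIte, add_zero] <;> ring

theorem onesMoment_insert_le (p r : List (Fin 2)) (a : Fin 2) :
    onesMoment (p ++ a :: r) ≤ onesMoment (p ++ r) + (p ++ r).length + 1 := by
  have := r.count_le_length (a := 1)
  rw [onesMoment_insert, List.length_append]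
  split_ifs <;> omega

theorem onesMoment_le_onesMoment_insert (p r : List (Fin 2)) (a : Fin 2) :
    onesMoment (p ++ r) ≤ onesMoment (p ++ a :: r) := by
  rw [onesMoment_insert]
  omega

theorem onesMoment_insert_le_add_length {p r p' r' : List (Fin 2)} (a b : Fin 2)
    (h : p ++ r = p' ++ r') :
    onesMoment (p ++ a :: r) ≤ onesMoment (p' ++ b :: r') + (p ++ a :: r).length := by
  have h₁ := onesMoment_insert_le p r a
  have h₂ := onesMoment_le_onesMoment_insert p' r' b
  have hl := congrArg List.length h
  rw [h] at h₁
  simp only [List.length_append, List.length_cons] at h₁ hl ⊢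
  omega

theorem insert_eq_insert_of_onesMoment_eq {p s r : List (Fin 2)} {a b : Fin 2}
    (h : onesMoment (p ++ a :: (s ++ r)) = onesMoment (p ++ s ++ b :: r)) :
    p ++ a :: (s ++ r) = p ++ s ++ b :: r := by
  rw [onesMoment_insert, onesMoment_insert, List.count_append, List.append_assoc,
    List.length_append] at h
  have hs := s.count_le_length (a := 1)
  obtain rfl | rfl := Fin.exists_fin_two.mp ⟨a, rfl⟩ <;>
    obtain rfl | rfl := Fin.exists_fin_two.mp ⟨b, rfl⟩ <;>
    simp only [Fin.isValue, zero_ne_one, ↓reduceIte, add_zero, Nat.add_left_cancel_iff,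
      Nat.add_eq_right] at h <;> try omega
  · refine List.append_cons_append_eq_of_forall_eq fun c hc => ?_
    by_contra hc0
    exact List.count_eq_zero.mp h (Fin.eq_one_of_ne_zero c hc0 ▸ hc)
  · exact List.append_cons_append_eq_of_forall_eq fun c hc =>
      (List.count_eq_length.mp (by omega) c hc).symm

theorem eq_of_onesMoment_insert_eq {p r p' r' : List (Fin 2)} {a b : Fin 2}
    (h : p ++ r = p' ++ r') (hm : onesMoment (p ++ a :: r) = onesMoment (p' ++ b :: r')) :
    p ++ a :: r = p' ++ b :: r' := by
  obtain ⟨s, rfl, rfl⟩ | ⟨s, rfl, rfl⟩ := List.append_eq_append_iff.mp h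
  · exact insert_eq_insert_of_onesMoment_eq hm
  · exact (insert_eq_insert_of_onesMoment_eq hm.symm).symm

theorem exists_common_deletion_of_fllDist_le_one {q n : ℕ} (hn : 0 < n) {x y : Fin n → Fin q}
    (h : fllDist x y ≤ 1) :
    ∃ (p r p' r' : List (Fin q)) (a b : Fin q),
      p ++ r = p' ++ r' ∧ List.ofFn x = p ++ a :: r ∧ List.ofFn y = p' ++ b :: r' := by
  obtain ⟨z, hzx, hzy, hz⟩ := exists_sublist_length_eq_lcsLen (List.ofFn x) (List.ofFn y)
  have hlen : (List.ofFn x).length = (z.take (n - 1)).length + 1 := by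
    have : n - 1 ≤ z.length := by unfold fllDist at h; omega
    simp only [List.length_take, List.length_ofFn]
    omega
  obtain ⟨p, a, r, hw, hx⟩ :=
    ((z.take_sublist _).trans hzx).exists_eq_append_cons_of_length_eq_succ hlen
  obtain ⟨p', b, r', hw', hy⟩ :=
    ((z.take_sublist _).trans hzy).exists_eq_append_cons_of_length_eq_succ
      (by rwa [List.length_ofFn] at hlen ⊢)
  exact ⟨p, r, p', r', a, b, hw.symm.trans hw', hx, hy⟩

theorem Finset.card_le_add_one_of_injOn_of_le_add {α : Type*} {s : Finset α} {f : α → ℕ}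
    {d : ℕ} (hf : Set.InjOn f s) (hd : ∀ a ∈ s, ∀ b ∈ s, f a ≤ f b + d) : s.card ≤ d + 1 := by
  rcases s.eq_empty_or_nonempty with rfl | hs
  · simp
  obtain ⟨b, hb, hmin⟩ := s.exists_min_image f hs
  calc s.card ≤ (Finset.Icc (f b) (f b + d)).card :=
        Finset.card_le_card_of_injOn f
          (fun a ha => Finset.mem_Icc.mpr ⟨hmin a ha, hd a ha b hb⟩) hf
    _ = d + 1 := by simp only [Nat.card_Icc]; omega

theorem onesMoment_ofFn_le_add_of_fllDist_le_one {n : ℕ} (hn : 0 < n) {x y : Fin n → Fin 2}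
    (h : fllDist x y ≤ 1) :
    onesMoment (List.ofFn x) ≤ onesMoment (List.ofFn y) + n := by
  obtain ⟨p, r, p', r', a, b, hz, hx, hy⟩ := exists_common_deletion_of_fllDist_le_one hn h
  have := onesMoment_insert_le_add_length a b hz
  rwa [← hx, ← hy, List.length_ofFn] at this

theorem eq_of_onesMoment_ofFn_eq_of_fllDist_le_one {n : ℕ} (hn : 0 < n) {x y : Fin n → Fin 2}
    (h : fllDist x y ≤ 1) (hm : onesMoment (List.ofFn x) = onesMoment (List.ofFn y)) : x = y := by
  obtain ⟨p, r, p', r', a, b, hz, hx, hy⟩ := exists_common_deletion_of_fllDist_le_one hn h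
  rw [hx, hy] at hm
  exact List.ofFn_injective (by rw [hx, hy, eq_of_onesMoment_insert_eq hz hm])

theorem IsAnticode1.card_le {n : ℕ} (hn : 0 < n) {A : Finset (Fin n → Fin 2)}
    (hA : IsAnticode1 n A) : A.card ≤ n + 1 :=
  Finset.card_le_add_one_of_injOn_of_le_add (f := fun x => onesMoment (List.ofFn x))
    (fun x hx y hy => eq_of_onesMoment_ofFn_eq_of_fllDist_le_one hn (hA x hx y hy))
    fun x hx y hy => onesMoment_ofFn_le_add_of_fllDist_le_one hn (hA x hx y hy)

theorem List.count_ofFn {α : Type*} [DecidableEq α] {n : ℕ} (x : Fin n → α) (a : α) :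
    (List.ofFn x).count a = (Finset.univ.filter fun i => x i = a).card := by
  rw [← Multiset.coe_count, ← Fin.univ_val_map, Multiset.count_map]
  simp [Finset.card, eq_comm]

theorem replicate_sublist_ofFn_of_wt_le_one {n : ℕ} {x : Fin n → Fin 2} (hx : wt x ≤ 1) :
    (List.replicate (n - 1) (0 : Fin 2)).Sublist (List.ofFn x) := by
  rw [List.replicate_sublist_iff, List.count_ofFn]
  have := Finset.card_filter_add_card_filter_not (s := Finset.univ) fun i => x i = 0
  rw [Finset.card_univ, Fintype.card_fin] at this
  unfold wt at hx
  simp only [ne_eq] at hx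
  omega

theorem isAnticode1_filter_wt_le_one (n : ℕ) :
    IsAnticode1 n (Finset.univ.filter fun a : Fin n → Fin 2 => wt a ≤ 1) := by
  intro a ha b hb
  simp only [Finset.mem_filter, Finset.mem_univ, true_and] at ha hb
  have := length_le_lcsLen (replicate_sublist_ofFn_of_wt_le_one ha)
    (replicate_sublist_ofFn_of_wt_le_one hb)
  unfold fllDist
  simp only [List.length_replicate] at this
  omega

theorem wt_single {n : ℕ} (i : Fin n) : wt (Pi.single i (1 : Fin 2)) = 1 := by
  simp [wt, Pi.single_apply, Finset.filter_eq']

theorem wt_le_one_iff {n : ℕ} {x : Fin n → Fin 2} :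
    wt x ≤ 1 ↔ x = 0 ∨ ∃ i, Pi.single i 1 = x := by
  constructor
  · intro hx
    rcases Nat.le_one_iff_eq_zero_or_eq_one.mp hx with h | h
    · exact Or.inl (hammingNorm_eq_zero.mp h)
    · obtain ⟨i, hi⟩ := Finset.card_eq_one.mp h
      refine Or.inr ⟨i, funext fun j => ?_⟩
      have := Finset.ext_iff.mp hi j
      simp only [Finset.mem_filter, Finset.mem_univ, true_and, Finset.mem_singleton] at this
      by_cases hj : j = i
      · subst hj; simpa using (Fin.eq_one_of_ne_zero _ (this.mpr rfl)).symm
      · simpa [hj] using (not_not.mp (this.not.mpr hj)).symm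
  · rintro (rfl | ⟨i, rfl⟩)
    · simp [wt]
    · rw [wt_single]

theorem card_filter_wt_le_one (n : ℕ) :
    (Finset.univ.filter fun a : Fin n → Fin 2 => wt a ≤ 1).card = n + 1 := by
  have hinj : Function.Injective fun i : Fin n => (Pi.single i 1 : Fin n → Fin 2) :=
    fun i j h => (by simpa [Pi.single_apply] using congrFun h j : j = i).symm
  have h0 : (0 : Fin n → Fin 2) ∉ Finset.univ.image fun i => Pi.single i 1 := by
    simpa [funext_iff] using fun i => ⟨i, by simp⟩
  have : Finset.univ.filter (fun a : Fin n → Fin 2 => wt a ≤ 1) =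
      insert 0 (Finset.univ.image fun i => Pi.single i 1) := by
    ext x
    simp [wt_le_one_iff, eq_comm]
  rw [this, Finset.card_insert_of_notMem h0, Finset.card_image_of_injective _ hinj,
    Finset.card_univ, Fintype.card_fin]

/-- For `n > 1`: every anticode of diameter one in `Z_2^n` has size
at most `n + 1`; the set of words of Hamming weight at most one is an anticode of
diameter one of size exactly `n + 1`; hence the maximum size of a maximal anticode of
diameter one is `n + 1`. -/
theorem max_anticode_diameter_one (n : ℕ) (hn : 1 < n) :
    (∀ A : Finset (Fin n → Fin 2), IsAnticode1 n A → A.card ≤ n + 1) ∧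
      IsAnticode1 n (Finset.univ.filter fun a : Fin n → Fin 2 => wt a ≤ 1) ∧
      (Finset.univ.filter fun a : Fin n → Fin 2 => wt a ≤ 1).card = n + 1 ∧
      IsGreatest
        {m | ∃ A : Finset (Fin n → Fin 2), IsMaximalAnticode1 n A ∧ A.card = m}
        (n + 1) := by
  have hcard : ∀ A, IsAnticode1 n A → A.card ≤ n + 1 := fun A hA => hA.card_le (by omega)
  have hW := isAnticode1_filter_wt_le_one n
  have hW_card := card_filter_wt_le_one n
  have hW_max : IsMaximalAnticode1 n _ :=
    ⟨hW, fun B hB hsub => Finset.eq_of_subset_of_card_le hsub (hW_card ▸ hcard B hB)⟩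
  refine ⟨hcard, hW, hW_card, ⟨_, hW_max, hW_card⟩, ?_⟩
  rintro m ⟨A, ⟨hA, -⟩, rfl⟩
  exact hcard A hA
end
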